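/- Let γ : ℝ → ℤ → ℂ² be a flow on discrete curves with g_k(t) ≠ 0, g_{k−1}(t) + g_k(t) ≠ 0 and u_k(t) ≠ 0 for all t,k, whose coefficients are α_k = −(u_k/(2 g_{k−1} g_k))·((g_{k−1} − g_k)/(g_{k−1} + g_k)) and β_k = −u_k/(g_{k−1} + g_k). Fix λ ∈ ℂ and set p_k = u_k/(g_k g_{k−1}) − λ. Then for all t and k the first Toda lattice flow equations hold: (∂_t g_k)/g_k = (1/2)(p_k − p_{k+1}) and ∂_t p_k = g_k^{−2} − g_{k−1}^{−2}. -/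

import Mathlib

noncomputable section

/-- The determinant of two vectors in `ℂ²`. -/
def det2 (a b : ℂ × ℂ) : ℂ := a.1 * b.2 - a.2 * b.1

/-- `g_k(t) = det(γ_k(t), γ_{k+1}(t))` for a time-dependent discrete curve. -/
def gD (γ : ℝ → ℤ → ℂ × ℂ) (t : ℝ) (k : ℤ) : ℂ := det2 (γ t k) (γ t (k + 1))

/-- `u_k(t) = det(γ_{k-1}(t), γ_{k+1}(t))` for a time-dependent discrete curve. -/
def uD (γ : ℝ → ℤ → ℂ × ℂ) (t : ℝ) (k : ℤ) : ℂ := det2 (γ t (k - 1)) (γ t (k + 1))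

/-- The Flaschka–Manakov variable `p_k = u_k/(g_k g_{k-1}) - λ`. -/
def pD (γ : ℝ → ℤ → ℂ × ℂ) (lam : ℂ) (t : ℝ) (k : ℤ) : ℂ :=
  uD γ t k / (gD γ t k * gD γ t (k - 1)) - lam

lemma hasDerivAt_fst' {f : ℝ → ℂ × ℂ} {f' : ℂ × ℂ} {t : ℝ} (hf : HasDerivAt f f' t) :
    HasDerivAt (fun s => (f s).1) f'.1 t :=
  ((ContinuousLinearMap.fst ℝ ℂ ℂ).hasFDerivAt.comp_hasDerivAt t hf)

lemma hasDerivAt_snd' {f : ℝ → ℂ × ℂ} {f' : ℂ × ℂ} {t : ℝ} (hf : HasDerivAt f f' t) :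
    HasDerivAt (fun s => (f s).2) f'.2 t :=
  ((ContinuousLinearMap.snd ℝ ℂ ℂ).hasFDerivAt.comp_hasDerivAt t hf)

lemma hasDerivAt_det2 {f g : ℝ → ℂ × ℂ} {f' g' : ℂ × ℂ} {t : ℝ}
    (hf : HasDerivAt f f' t) (hg : HasDerivAt g g' t) :
    HasDerivAt (fun s => det2 (f s) (g s)) (det2 f' (g t) + det2 (f t) g') t := by
  have h := (((hasDerivAt_fst' hf).mul (hasDerivAt_snd' hg)).sub
    ((hasDerivAt_snd' hf).mul (hasDerivAt_fst' hg)))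
  convert h using 1
  · rfl
  · rfl
  simp [det2]; ring

lemma det2_expand_left (A B : ℂ) (x y z w : ℂ × ℂ) :
    det2 (A • x + B • (y - z)) w = A * det2 x w + B * (det2 y w - det2 z w) := by
  simp [det2, Prod.smul_fst, Prod.smul_snd, smul_eq_mul]; ring

lemma det2_expand_right (A B : ℂ) (x y z w : ℂ × ℂ) :
    det2 w (A • x + B • (y - z)) = A * det2 w x + B * (det2 w y - det2 w z) := by
  simp [det2, Prod.smul_fst, Prod.smul_snd, smul_eq_mul]; ring

lemma det2_self (x : ℂ × ℂ) : det2 x x = 0 := by simp [det2]; ring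

lemma det2_swap (a b : ℂ × ℂ) : det2 a b = -det2 b a := by simp [det2]; ring

lemma pluecker (a b c d : ℂ × ℂ) :
    det2 a c * det2 b d = det2 a b * det2 c d + det2 a d * det2 b c := by
  simp [det2]; ring

lemma L1 (a b x s : ℂ) (ha : a ≠ 0) (hb : b ≠ 0) (hs : s ≠ 0) (hsab : s = a + b) :
    -(x / (2 * a * b)) * ((a - b) / s) * b + x / s = x / (2 * a) := by
  field_simp
  subst hsab; ring

lemma L2 (b c y r : ℂ) (hb : b ≠ 0) (hc : c ≠ 0) (hr : r ≠ 0) (hrbc : r = b + c) :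
    -(y / (2 * b * c)) * ((b - c) / r) * b + -(y / r) = -(y / (2 * c)) := by
  field_simp
  subst hrbc; ring

lemma ST1 (a b c x y l : ℂ) (ha : a ≠ 0) (hb : b ≠ 0) (hc : c ≠ 0) :
    b * (1 / 2 * ((x / (b * a) - l) - (y / (c * b) - l))) = x / (2 * a) - y / (2 * c) := by
  field_simp
  ring

lemma N1 (g0 g1 g2 u1 u2 s0 : ℂ) (h0 : g0 ≠ 0) (h1 : g1 ≠ 0) (hv1 : u1 ≠ 0)
    (hs0 : s0 ≠ 0) (hs0e : s0 = g0 + g1) :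
    -(u1 / (2 * g0 * g1)) * ((g0 - g1) / s0) * u2 +
      -(u1 / s0) / u1 * (g2 - (u1 * u2 - g0 * g2) / g1) =
    u1 * u2 / (2 * g0 * g1) - g2 / g1 := by
  field_simp
  subst hs0e; ring

lemma N2 (g1 g2 g3 u2 u3 s2 : ℂ) (h2 : g2 ≠ 0) (h3 : g3 ≠ 0) (hv3 : u3 ≠ 0)
    (hs2 : s2 ≠ 0) (hs2e : s2 = g2 + g3) :
    -(u3 / (2 * g2 * g3)) * ((g2 - g3) / s2) * u2 +
      -(u3 / s2) / u3 * ((u2 * u3 - g1 * g3) / g2 - g1) =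
    g1 / g2 - u2 * u3 / (2 * g2 * g3) := by
  field_simp
  subst hs2e; ring

lemma FIN (g0 g1 g2 g3 u1 u2 u3 : ℂ) (h0 : g0 ≠ 0) (h1 : g1 ≠ 0) (h2 : g2 ≠ 0) (h3 : g3 ≠ 0) :
    (g2 ^ 2)⁻¹ - (g1 ^ 2)⁻¹ =
      ((u1 * u2 / (2 * g0 * g1) - g2 / g1 + (g1 / g2 - u2 * u3 / (2 * g2 * g3))) * (g2 * g1) -
          u2 * ((u2 / (2 * g1) - u3 / (2 * g3)) * g1 + g2 * (u1 / (2 * g0) - u2 / (2 * g2)))) /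
        (g2 * g1) ^ 2 := by
  rw [eq_div_iff (pow_ne_zero 2 (mul_ne_zero h2 h1))]
  field_simp
  ring

set_option maxHeartbeats 1000000 in
/-- For the flow on discrete curves in `ℂ²` with coefficients
`α_k = -(u_k/(2 g_{k-1} g_k))(g_{k-1} - g_k)/(g_{k-1} + g_k)` and
`β_k = -u_k/(g_{k-1} + g_k)`, the first Toda lattice flow equations hold:
`(∂_t g_k)/g_k = (1/2)(p_k - p_{k+1})` and `∂_t p_k = g_k⁻² - g_{k-1}⁻²`. -/
theorem stmt13 (γ : ℝ → ℤ → ℂ × ℂ) (α β : ℝ → ℤ → ℂ) (lam : ℂ)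
    (hg : ∀ (t : ℝ) (k : ℤ), gD γ t k ≠ 0)
    (hgsum : ∀ (t : ℝ) (k : ℤ), gD γ t (k - 1) + gD γ t k ≠ 0)
    (hu : ∀ (t : ℝ) (k : ℤ), uD γ t k ≠ 0)
    (hα : ∀ (t : ℝ) (k : ℤ), α t k =
      -(uD γ t k / (2 * gD γ t (k - 1) * gD γ t k)) *
        ((gD γ t (k - 1) - gD γ t k) / (gD γ t (k - 1) + gD γ t k)))
    (hβ : ∀ (t : ℝ) (k : ℤ), β t k = -(uD γ t k / (gD γ t (k - 1) + gD γ t k)))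
    (hflow : ∀ (t : ℝ) (k : ℤ), HasDerivAt (fun s => γ s k)
      (α t k • γ t k + (β t k / uD γ t k) • (γ t (k + 1) - γ t (k - 1))) t) :
    ∀ (t : ℝ) (k : ℤ),
      HasDerivAt (fun s => gD γ s k)
        (gD γ t k * ((1 / 2) * (pD γ lam t k - pD γ lam t (k + 1)))) t ∧
      HasDerivAt (fun s => pD γ lam s k)
        ((gD γ t k ^ 2)⁻¹ - (gD γ t (k - 1) ^ 2)⁻¹) t := by
  intro t k
  have hDg : ∀ m : ℤ, HasDerivAt (fun s => gD γ s m)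
      (uD γ t m / (2 * gD γ t (m - 1)) - uD γ t (m + 1) / (2 * gD γ t (m + 1))) t := by
    intro m
    have h := hasDerivAt_det2 (hflow t m) (hflow t (m + 1))
    rw [det2_expand_left, det2_expand_right, show m + 1 - 1 = m from by ring] at h
    rw [show det2 (γ t m) (γ t (m + 1)) = gD γ t m from rfl,
        show det2 (γ t (m - 1)) (γ t (m + 1)) = uD γ t m from rfl,
        show det2 (γ t m) (γ t (m + 1 + 1)) = uD γ t (m + 1) from by
          unfold uD; rw [show m + 1 - 1 = m from by ring],
        det2_self, det2_self] at h
    have e1 : β t m / uD γ t m * (0 - uD γ t m) = -β t m := by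
      rw [zero_sub, mul_neg, div_mul_cancel₀ _ (hu t m)]
    have e2 : β t (m + 1) / uD γ t (m + 1) * (uD γ t (m + 1) - 0) = β t (m + 1) := by
      rw [sub_zero, div_mul_cancel₀ _ (hu t (m + 1))]
    rw [e1, e2, hα t m, hα t (m + 1), hβ t m, hβ t (m + 1),
        show m + 1 - 1 = m from by ring] at h
    have l1 := L1 (gD γ t (m - 1)) (gD γ t m) (uD γ t m) (gD γ t (m - 1) + gD γ t m)
      (hg t (m - 1)) (hg t m) (hgsum t m) rfl
    have l2 := L2 (gD γ t m) (gD γ t (m + 1)) (uD γ t (m + 1)) (gD γ t m + gD γ t (m + 1))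
      (hg t m) (hg t (m + 1))
      (by have := hgsum t (m + 1); rwa [add_sub_cancel_right] at this) rfl
    convert h using 1
    · rfl
    linear_combination -l1 - l2
  refine ⟨?_, ?_⟩
  · have e : gD γ t k * (1 / 2 * (pD γ lam t k - pD γ lam t (k + 1)))
        = uD γ t k / (2 * gD γ t (k - 1)) - uD γ t (k + 1) / (2 * gD γ t (k + 1)) := by
      simp only [pD, add_sub_cancel_right]
      exact ST1 (gD γ t (k - 1)) (gD γ t k) (gD γ t (k + 1)) (uD γ t k) (uD γ t (k + 1)) lam
        (hg t (k - 1)) (hg t k) (hg t (k + 1))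
    rw [e]
    exact hDg k
  · have h := hasDerivAt_det2 (hflow t (k - 1)) (hflow t (k + 1))
    rw [det2_expand_left, det2_expand_right, show k - 1 + 1 = k from by ring,
        show k - 1 - 1 = k - 2 from by ring, show k + 1 - 1 = k from by ring] at h
    rw [show det2 (γ t (k - 1)) (γ t (k + 1)) = uD γ t k from rfl,
        show det2 (γ t k) (γ t (k + 1)) = gD γ t k from rfl,
        show det2 (γ t (k - 1)) (γ t k) = gD γ t (k - 1) from by
          unfold gD; rw [show k - 1 + 1 = k from by ring]] at h
    have hw : det2 (γ t (k - 2)) (γ t (k + 1)) * gD γ t (k - 1)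
        = uD γ t (k - 1) * uD γ t k - gD γ t (k - 2) * gD γ t k := by
      have hp := pluecker (γ t (k - 2)) (γ t (k - 1)) (γ t (k + 1)) (γ t k)
      rw [show det2 (γ t (k - 1)) (γ t k) = gD γ t (k - 1) from by
            unfold gD; rw [show k - 1 + 1 = k from by ring],
          show det2 (γ t (k - 2)) (γ t (k - 1)) = gD γ t (k - 2) from by
            unfold gD; rw [show k - 2 + 1 = k - 1 from by ring],
          show det2 (γ t (k + 1)) (γ t k) = -gD γ t k from by
            rw [det2_swap]; rfl,
          show det2 (γ t (k - 2)) (γ t k) = uD γ t (k - 1) from by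
            unfold uD; rw [show k - 1 - 1 = k - 2 from by ring, show k - 1 + 1 = k from by ring],
          show det2 (γ t (k - 1)) (γ t (k + 1)) = uD γ t k from rfl] at hp
      linear_combination hp
    have hw' : det2 (γ t (k - 1)) (γ t (k + 1 + 1)) * gD γ t k
        = uD γ t k * uD γ t (k + 1) - gD γ t (k - 1) * gD γ t (k + 1) := by
      have hp := pluecker (γ t (k - 1)) (γ t k) (γ t (k + 1 + 1)) (γ t (k + 1))
      rw [show det2 (γ t k) (γ t (k + 1)) = gD γ t k from rfl,
          show det2 (γ t (k - 1)) (γ t k) = gD γ t (k - 1) from by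
            unfold gD; rw [show k - 1 + 1 = k from by ring],
          show det2 (γ t (k + 1 + 1)) (γ t (k + 1)) = -gD γ t (k + 1) from by
            rw [det2_swap]; rfl,
          show det2 (γ t (k - 1)) (γ t (k + 1)) = uD γ t k from rfl,
          show det2 (γ t k) (γ t (k + 1 + 1)) = uD γ t (k + 1) from by
            unfold uD; rw [show k + 1 - 1 = k from by ring]] at hp
      linear_combination hp
    have wval : det2 (γ t (k - 2)) (γ t (k + 1))
        = (uD γ t (k - 1) * uD γ t k - gD γ t (k - 2) * gD γ t k) / gD γ t (k - 1) := by
      rw [eq_div_iff (hg t (k - 1))]; exact hw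
    have wval' : det2 (γ t (k - 1)) (γ t (k + 1 + 1))
        = (uD γ t k * uD γ t (k + 1) - gD γ t (k - 1) * gD γ t (k + 1)) / gD γ t k := by
      rw [eq_div_iff (hg t k)]; exact hw'
    rw [wval, wval', hα t (k - 1), hα t (k + 1), hβ t (k - 1), hβ t (k + 1),
        show k - 1 - 1 = k - 2 from by ring, show k + 1 - 1 = k from by ring] at h
    have n1 := N1 (gD γ t (k - 2)) (gD γ t (k - 1)) (gD γ t k) (uD γ t (k - 1)) (uD γ t k)
      (gD γ t (k - 2) + gD γ t (k - 1)) (hg t (k - 2)) (hg t (k - 1)) (hu t (k - 1))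
      (by have := hgsum t (k - 1); rwa [show k - 1 - 1 = k - 2 from by ring] at this) rfl
    have n2 := N2 (gD γ t (k - 1)) (gD γ t k) (gD γ t (k + 1)) (uD γ t k) (uD γ t (k + 1))
      (gD γ t k + gD γ t (k + 1)) (hg t k) (hg t (k + 1)) (hu t (k + 1))
      (by have := hgsum t (k + 1); rwa [add_sub_cancel_right] at this) rfl
    have hU : HasDerivAt (fun s => uD γ s k)
        (uD γ t (k - 1) * uD γ t k / (2 * gD γ t (k - 2) * gD γ t (k - 1)) -
            gD γ t k / gD γ t (k - 1) +
          (gD γ t (k - 1) / gD γ t k -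
            uD γ t k * uD γ t (k + 1) / (2 * gD γ t k * gD γ t (k + 1)))) t := by
      convert h using 1
      · rfl
      linear_combination -n1 - n2
    have hG2 := hDg k
    have hG1 := hDg (k - 1)
    rw [show k - 1 - 1 = k - 2 from by ring, show k - 1 + 1 = k from by ring] at hG1
    have hne : gD γ t k * gD γ t (k - 1) ≠ 0 := mul_ne_zero (hg t k) (hg t (k - 1))
    have hp := (hU.div (hG2.mul hG1) hne).sub_const lam
    have e := FIN (gD γ t (k - 2)) (gD γ t (k - 1)) (gD γ t k) (gD γ t (k + 1))
      (uD γ t (k - 1)) (uD γ t k) (uD γ t (k + 1))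
      (hg t (k - 2)) (hg t (k - 1)) (hg t k) (hg t (k + 1))
    rw [e]
    exact hp
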